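/- Let ω be a nondegenerate alternating C^∞(M)-bilinear form on D(M) and H the unique vector field with i_H ω = -δ1. Then the map X ↦ i_Xω is an isomorphism of C^∞(M)-modules from Ker(i_1ω|_{𝔛(M)}) onto D(M)*_{C^∞(M),H} = {η ∈ D(M)* : η|_{C^∞(M)} = 0 and η(H) = 0}. -/

import Mathlib

/-!
Skew-symmetry turns `i_H ω = -δ1` into `ω(X, H) = X(1)`, and turns `ω(1, X) = 0` into
`ω(X, f) = f ω(X, 1) = 0` for every function `f`. So `X ↦ i_X ω` maps the kernel into the
annihilator of `C^∞(M)` and `H`; it is injective because `ω` is, and conversely the preimage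
under `ω` of a form vanishing on `C^∞(M)` and `H` lies in the kernel by the same two identities.
-/

open LinearMap

set_option linter.unusedSectionVars false
set_option linter.unusedVariables false

section Prelim

variable (K A : Type*) [Field K] [CharZero K] [CommRing A] [Algebra K A]

/-- A differential operator of order at most 1 on `A`. -/
def IsDiff1 (φ : A →ₗ[K] A) : Prop :=
  ∀ a b : A, φ (a * b) = a * φ b + b * φ a - a * b * φ 1

variable {K A}

/-- The commutator bracket of two endomorphisms. -/
def opBracket (φ ψ : A →ₗ[K] A) : A →ₗ[K] A := φ ∘ₗ ψ - ψ ∘ₗ φ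

theorem isDiff1_mulLeft (f : A) : IsDiff1 K A (LinearMap.mulLeft K f) := by
  intro a b; simp only [LinearMap.mulLeft_apply, mul_one]; ring

theorem IsDiff1.opBracket {φ ψ : A →ₗ[K] A} (hφ : IsDiff1 K A φ) (hψ : IsDiff1 K A ψ) :
    IsDiff1 K A (_root_.opBracket φ ψ) := by
  intro a b
  simp only [_root_.opBracket, LinearMap.sub_apply, LinearMap.comp_apply]
  rw [hψ a b, hφ a b]
  simp only [map_add, map_sub]
  rw [hφ a (ψ b), hφ b (ψ a), hφ (a * b) (ψ 1), hψ a (φ b), hψ b (φ a), hψ (a * b) (φ 1),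
    hφ a b, hψ a b]
  ring

variable (K A) in
/-- The `A`-module `Diff_K(A)` of differential operators of order at most 1 on `A`. -/
def Diff1 : Submodule A (A →ₗ[K] A) where
  carrier := {φ | IsDiff1 K A φ}
  add_mem' := by
    intro φ ψ hφ hψ a b
    simp only [LinearMap.add_apply, hφ a b, hψ a b]; ring
  zero_mem' := by intro a b; simp
  smul_mem' := by
    intro c φ hφ a b
    simp only [LinearMap.smul_apply, smul_eq_mul, hφ a b]; ring

/-- The commutator bracket on `Diff1`. -/
def Diff1.bk (φ ψ : Diff1 K A) : Diff1 K A :=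
  ⟨opBracket φ.1 ψ.1, IsDiff1.opBracket φ.2 ψ.2⟩

variable (K) in
/-- The multiplication operator by `f`, as a differential operator of order `≤ 1`. -/
def Diff1.const (f : A) : Diff1 K A := ⟨LinearMap.mulLeft K f, isDiff1_mulLeft f⟩

/-- Evaluation at the unit: the linear form `δ1 : φ ↦ φ(1)` on `Diff1`. -/
def ev1 : Diff1 K A →ₗ[A] A where
  toFun φ := φ.1 1
  map_add' φ ψ := rfl
  map_smul' c φ := rfl

end Prelim

section Hamiltonian

theorem LinearMap.IsAlt.apply_eq_of_eq_neg {R M : Type*} [CommRing R] [AddCommGroup M] [Module R M]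
    {B : M →ₗ[R] M →ₗ[R] R} (hB : B.IsAlt) {h : M} {ℓ : M →ₗ[R] R} (hh : B h = -ℓ) (x : M) :
    B x h = ℓ x := by
  rw [← hB.neg, hh, LinearMap.neg_apply, neg_neg]

variable {K A : Type*} [Field K] [CharZero K] [CommRing A] [Algebra K A]

theorem Diff1.const_eq_smul_const_one (f : A) : Diff1.const K f = f • Diff1.const K (1 : A) := by
  ext a
  simp [Diff1.const]

theorem LinearMap.IsAlt.apply_const_eq_zero {ω : Diff1 K A →ₗ[A] Diff1 K A →ₗ[A] A}
    (hω : ω.IsAlt) {X : Diff1 K A} (hX : ω (Diff1.const K 1) X = 0) (f : A) :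
    ω X (Diff1.const K f) = 0 := by
  rw [Diff1.const_eq_smul_const_one, map_smul, hω.eq_iff.mp hX, smul_zero]

end Hamiltonian

section Mfd

open scoped Manifold

local notation "∞" => (⊤ : ℕ∞)

variable {EM : Type*} [NormedAddCommGroup EM] [NormedSpace ℝ EM]
  {HM : Type*} [TopologicalSpace HM] {I : ModelWithCorners ℝ EM HM}
  {M : Type*} [TopologicalSpace M] [ChartedSpace HM M] [IsManifold I ∞ M]

theorem stmt10 (ω : Diff1 ℝ C^∞⟮I, M; ℝ⟯ →ₗ[C^∞⟮I, M; ℝ⟯] Diff1 ℝ C^∞⟮I, M; ℝ⟯ →ₗ[C^∞⟮I, M; ℝ⟯] C^∞⟮I, M; ℝ⟯)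
    (halt : ∀ φ : Diff1 ℝ C^∞⟮I, M; ℝ⟯, ω φ φ = 0) (hbij : Function.Bijective ω)
    (Hv : Diff1 ℝ C^∞⟮I, M; ℝ⟯) (hH : ω Hv = -ev1) :
    (∀ X : Diff1 ℝ C^∞⟮I, M; ℝ⟯, X.1 1 = 0 → ω (Diff1.const ℝ (1 : C^∞⟮I, M; ℝ⟯)) X = 0 →
        (ω X Hv = 0 ∧ ∀ f : C^∞⟮I, M; ℝ⟯, ω X (Diff1.const ℝ f) = 0)) ∧
      (∀ X Y : Diff1 ℝ C^∞⟮I, M; ℝ⟯, X.1 1 = 0 → ω (Diff1.const ℝ (1 : C^∞⟮I, M; ℝ⟯)) X = 0 → Y.1 1 = 0 → ω (Diff1.const ℝ (1 : C^∞⟮I, M; ℝ⟯)) Y = 0 →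
        ω X = ω Y → X = Y) ∧
      ∀ η : Diff1 ℝ C^∞⟮I, M; ℝ⟯ →ₗ[C^∞⟮I, M; ℝ⟯] C^∞⟮I, M; ℝ⟯, η Hv = 0 → (∀ f : C^∞⟮I, M; ℝ⟯, η (Diff1.const ℝ f) = 0) →
        ∃ X : Diff1 ℝ C^∞⟮I, M; ℝ⟯, (X.1 1 = 0 ∧ ω (Diff1.const ℝ (1 : C^∞⟮I, M; ℝ⟯)) X = 0) ∧ ω X = η := by
  have hω : ω.IsAlt := halt
  refine ⟨fun X hX1 hXc ↦ ⟨(hω.apply_eq_of_eq_neg hH X).trans hX1, hω.apply_const_eq_zero hXc⟩,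
    fun X Y _ _ _ _ h ↦ hbij.1 h, fun η hηH hηc ↦ ?_⟩
  obtain ⟨X, rfl⟩ := hbij.2 η
  exact ⟨X, ⟨(hω.apply_eq_of_eq_neg hH X).symm.trans hηH, hω.eq_iff.mp (hηc 1)⟩, rfl⟩

end Mfd
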